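/- Let M₁ = (E, I₁) and M₂ = (E, I₂) be two partition matroids that have a common independent set of size r and share no double block, and let k ≥ 2 be an integer with k ≤ r/3. Then for every common independent set S with |S| = k − 2, the random walk matrix of the graph H_S satisfies λ₂ ≤ 1/k. -/
import Mathlib


open Finset

/-- A matroid on a finite ground set `E`, given by its (finite, nonempty, downward
closed) family of independent sets, satisfying the exchange property. -/
structure FinMatroid (E : Type*) [Fintype E] [DecidableEq E] where
  ind : Finset (Finset E)
  empty_mem : ∅ ∈ ind
  subset_mem : ∀ S ∈ ind, ∀ T ⊆ S, T ∈ ind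
  exchange : ∀ S ∈ ind, ∀ T ∈ ind, T.card < S.card →
    ∃ x ∈ S, x ∉ T ∧ insert x T ∈ ind

variable {E : Type*} [Fintype E] [DecidableEq E]

/-- `M` is the partition matroid with blocks the fibres of `b` and capacities `cap`:
a set is independent iff it meets the block `b⁻¹(i)` in at most `cap i` elements. -/
def IsPartitionWith (M : FinMatroid E) (b : E → ℕ) (cap : ℕ → ℕ) : Prop :=
  ∀ S : Finset E, S ∈ M.ind ↔ ∀ i : ℕ, (S.filter (fun x => b x = i)).card ≤ cap i

/-- The common independent sets of `M₁` and `M₂` of size `k`. -/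
def commonK (M₁ M₂ : FinMatroid E) (k : ℕ) : Finset (Finset E) :=
  (M₁.ind ∩ M₂.ind).filter (fun S => S.card = k)

/-- The vertex set of the graph `H_S` of the link of the matroid intersection
complex at a common independent set `S`: elements `x ∉ S` with `S ∪ {x}` a common
independent set. -/
def miHsVerts (M₁ M₂ : FinMatroid E) (S : Finset E) : Finset E :=
  Finset.univ.filter (fun x => x ∉ S ∧ insert x S ∈ M₁.ind ∩ M₂.ind)

/-- The neighbours of `x` in `H_S`: the vertices `y ≠ x` of `H_S` with
`S ∪ {x, y}` a common independent set. -/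
def miHsNbrs (M₁ M₂ : FinMatroid E) (S : Finset E) (x : E) : Finset E :=
  (miHsVerts M₁ M₂ S).filter
    (fun y => y ≠ x ∧ insert y (insert x S) ∈ M₁.ind ∩ M₂.ind)

/-- The second largest eigenvalue of the random walk matrix `D⁻¹A` of the graph
`H_S`: the walk is self-adjoint with respect to the degree-proportional stationary
distribution, so by the variational principle `λ₂` is the supremum of Rayleigh
quotients of (nonzero) functions orthogonal to the constants in the
degree-weighted inner product. -/
noncomputable def miHsLam2 (M₁ M₂ : FinMatroid E) (S : Finset E) : ℝ :=
  sSup { r : ℝ | ∃ f : E → ℝ,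
    (∑ x ∈ miHsVerts M₁ M₂ S, ((miHsNbrs M₁ M₂ S x).card : ℝ) * f x) = 0 ∧
    (∑ x ∈ miHsVerts M₁ M₂ S, ((miHsNbrs M₁ M₂ S x).card : ℝ) * f x ^ 2) ≠ 0 ∧
    r = (∑ x ∈ miHsVerts M₁ M₂ S, f x * ∑ y ∈ miHsNbrs M₁ M₂ S x, f y) /
        (∑ x ∈ miHsVerts M₁ M₂ S, ((miHsNbrs M₁ M₂ S x).card : ℝ) * f x ^ 2) }

/- ### Auxiliary lemmas -/

lemma pm_insert_iff {M : FinMatroid E} {b : E → ℕ} {cap : ℕ → ℕ}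
    (h : IsPartitionWith M b cap) {S : Finset E} (hS : S ∈ M.ind) {x : E} (hx : x ∉ S) :
    insert x S ∈ M.ind ↔ (S.filter (fun z => b z = b x)).card + 1 ≤ cap (b x) := by
  rw [h (insert x S)]
  constructor
  · intro hall
    have h1 := hall (b x)
    rwa [Finset.filter_insert, if_pos rfl,
      Finset.card_insert_of_notMem (fun hc => hx (Finset.mem_of_mem_filter _ hc))] at h1
  · intro hle i
    rw [Finset.filter_insert]
    split_ifs with hi
    · rw [Finset.card_insert_of_notMem (fun hc => hx (Finset.mem_of_mem_filter _ hc))]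
      subst hi
      exact hle
    · exact (h S).mp hS i

lemma pm_insert2_iff {M : FinMatroid E} {b : E → ℕ} {cap : ℕ → ℕ}
    (h : IsPartitionWith M b cap) {S : Finset E} {x y : E}
    (hx : x ∉ S) (hy : y ∉ S) (hxy : y ≠ x)
    (hxS : insert x S ∈ M.ind) (hyS : insert y S ∈ M.ind) :
    insert y (insert x S) ∈ M.ind ↔
      ¬(b x = b y ∧ cap (b x) = (S.filter (fun z => b z = b x)).card + 1) := by
  have hSi : S ∈ M.ind := M.subset_mem _ hxS S (Finset.subset_insert _ _)
  have hy' : y ∉ insert x S := by simp [hxy, hy]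
  have hyb : (S.filter (fun z => b z = b y)).card + 1 ≤ cap (b y) :=
    (pm_insert_iff h hSi hy).mp hyS
  rw [pm_insert_iff h hxS hy']
  by_cases hbb : b x = b y
  · rw [Finset.filter_insert, if_pos hbb,
      Finset.card_insert_of_notMem (fun hc => hx (Finset.mem_of_mem_filter _ hc))]
    rw [← hbb] at hyb ⊢
    simp only [eq_self_iff_true, true_and]
    omega
  · rw [Finset.filter_insert, if_neg hbb]
    simp only [hbb, false_and, not_false_iff, iff_true]
    exact hyb

lemma tight_card_le {M : FinMatroid E} {b : E → ℕ} {cap : ℕ → ℕ}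
    (h : IsPartitionWith M b cap) {T W : Finset E} (hT : T ∈ M.ind) :
    (T ∩ Finset.univ.filter
        (fun y => (W.filter (fun z => b z = b y)).card = cap (b y))).card
      ≤ (W ∩ Finset.univ.filter
        (fun y => (W.filter (fun z => b z = b y)).card = cap (b y))).card := by
  classical
  set U : Finset E :=
    Finset.univ.filter (fun y => (W.filter (fun z => b z = b y)).card = cap (b y)) with hU
  set I : Finset ℕ := ((T ∩ U) ∪ (W ∩ U)).image b with hI
  have hmap1 : ∀ y ∈ T ∩ U, b y ∈ I :=
    fun y hy => Finset.mem_image_of_mem b (Finset.mem_union_left _ hy)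
  have hmap2 : ∀ y ∈ W ∩ U, b y ∈ I :=
    fun y hy => Finset.mem_image_of_mem b (Finset.mem_union_right _ hy)
  rw [Finset.card_eq_sum_card_fiberwise hmap1, Finset.card_eq_sum_card_fiberwise hmap2]
  apply Finset.sum_le_sum
  intro i hi
  obtain ⟨y₀, hy₀, hby₀⟩ := Finset.mem_image.mp hi
  have htight : (W.filter (fun z => b z = i)).card = cap i := by
    have hy₀U : y₀ ∈ U := by
      rcases Finset.mem_union.mp hy₀ with h' | h' <;>
        exact (Finset.mem_inter.mp h').2
    have := (Finset.mem_filter.mp hy₀U).2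
    rwa [hby₀] at this
  have e1 : (T ∩ U).filter (fun z => b z = i) = T.filter (fun z => b z = i) := by
    ext z
    simp only [Finset.mem_filter, Finset.mem_inter, hU, Finset.mem_univ, true_and]
    constructor
    · rintro ⟨⟨hzT, _⟩, hz⟩; exact ⟨hzT, hz⟩
    · rintro ⟨hzT, hz⟩
      refine ⟨⟨hzT, ?_⟩, hz⟩
      rw [hz]; exact htight
  have e2 : (W ∩ U).filter (fun z => b z = i) = W.filter (fun z => b z = i) := by
    ext z
    simp only [Finset.mem_filter, Finset.mem_inter, hU, Finset.mem_univ, true_and]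
    constructor
    · rintro ⟨⟨hzW, _⟩, hz⟩; exact ⟨hzW, hz⟩
    · rintro ⟨hzW, hz⟩
      refine ⟨⟨hzW, ?_⟩, hz⟩
      rw [hz]; exact htight
  rw [e1, e2, htight]
  exact (h T).mp hT i

lemma deg_lower {M₁ M₂ : FinMatroid E} {b₁ b₂ : E → ℕ} {cap₁ cap₂ : ℕ → ℕ}
    (h₁ : IsPartitionWith M₁ b₁ cap₁) (h₂ : IsPartitionWith M₂ b₂ cap₂)
    {r k : ℕ} (hr : ∃ T ∈ M₁.ind ∩ M₂.ind, T.card = r)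
    (hk : 2 ≤ k) (hkr : 3 * k ≤ r)
    {S : Finset E} (hS : S ∈ M₁.ind ∩ M₂.ind) (hcard : S.card = k - 2)
    {x : E} (hx : x ∈ miHsVerts M₁ M₂ S) :
    k ≤ (miHsNbrs M₁ M₂ S x).card := by
  classical
  obtain ⟨T, hT, hTcard⟩ := hr
  rw [Finset.mem_inter] at hT
  obtain ⟨hxS, hxi⟩ := (Finset.mem_filter.mp hx).2
  rw [Finset.mem_inter] at hxi
  set W : Finset E := insert x S with hW
  have hW1 : W ∈ M₁.ind := hxi.1
  have hW2 : W ∈ M₂.ind := hxi.2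
  have hWcard : W.card = k - 1 := by
    rw [hW, Finset.card_insert_of_notMem hxS, hcard]; omega
  set U₁ : Finset E :=
    Finset.univ.filter (fun y => (W.filter (fun z => b₁ z = b₁ y)).card = cap₁ (b₁ y)) with hU₁
  set U₂ : Finset E :=
    Finset.univ.filter (fun y => (W.filter (fun z => b₂ z = b₂ y)).card = cap₂ (b₂ y)) with hU₂
  have hTU₁ : (T ∩ U₁).card ≤ (W ∩ U₁).card := tight_card_le h₁ hT.1
  have hTU₂ : (T ∩ U₂).card ≤ (W ∩ U₂).card := tight_card_le h₂ hT.2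
  set Good : Finset E :=
    T.filter (fun y => y ∉ W ∧ insert y W ∈ M₁.ind ∩ M₂.ind) with hGood
  have hGN : Good ⊆ miHsNbrs M₁ M₂ S x := by
    intro y hy
    obtain ⟨hyT, hyW, hyi⟩ := Finset.mem_filter.mp hy
    rw [Finset.mem_inter] at hyi
    have hyS : y ∉ S := fun hc => hyW (Finset.mem_insert_of_mem hc)
    have hynx : y ≠ x := fun hc => hyW (hc ▸ Finset.mem_insert_self x S)
    have hins1 : insert y S ∈ M₁.ind :=
      M₁.subset_mem _ hyi.1 _ (Finset.insert_subset_insert _ (Finset.subset_insert _ _))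
    have hins2 : insert y S ∈ M₂.ind :=
      M₂.subset_mem _ hyi.2 _ (Finset.insert_subset_insert _ (Finset.subset_insert _ _))
    exact Finset.mem_filter.mpr ⟨Finset.mem_filter.mpr ⟨Finset.mem_univ _,
      hyS, Finset.mem_inter.mpr ⟨hins1, hins2⟩⟩, hynx, Finset.mem_inter.mpr ⟨hyi.1, hyi.2⟩⟩
  have hBad : T \ Good ⊆ ((T ∩ W) \ (U₁ ∪ U₂)) ∪ (T ∩ U₁) ∪ (T ∩ U₂) := by
    intro y hy
    obtain ⟨hyT, hyG⟩ := Finset.mem_sdiff.mp hy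
    rw [hGood, Finset.mem_filter] at hyG
    push_neg at hyG
    by_cases hyW : y ∈ W
    · by_cases hyU : y ∈ U₁ ∪ U₂
      · rcases Finset.mem_union.mp hyU with h' | h'
        · exact Finset.mem_union_left _ (Finset.mem_union_right _
            (Finset.mem_inter.mpr ⟨hyT, h'⟩))
        · exact Finset.mem_union_right _ (Finset.mem_inter.mpr ⟨hyT, h'⟩)
      · exact Finset.mem_union_left _ (Finset.mem_union_left _
          (Finset.mem_sdiff.mpr ⟨Finset.mem_inter.mpr ⟨hyT, hyW⟩, hyU⟩))
    · have hyni : insert y W ∉ M₁.ind ∩ M₂.ind := hyG hyT hyW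
      rw [Finset.mem_inter] at hyni
      push_neg at hyni
      by_cases hy1 : insert y W ∈ M₁.ind
      · have hy2 := hyni hy1
        have hle := (h₂ W).mp hW2 (b₂ y)
        have hgt : ¬((W.filter (fun z => b₂ z = b₂ y)).card + 1 ≤ cap₂ (b₂ y)) :=
          fun hc => hy2 ((pm_insert_iff h₂ hW2 hyW).mpr hc)
        have hyU : y ∈ U₂ := by
          rw [hU₂, Finset.mem_filter]
          exact ⟨Finset.mem_univ _, by omega⟩
        exact Finset.mem_union_right _ (Finset.mem_inter.mpr ⟨hyT, hyU⟩)
      · have hle := (h₁ W).mp hW1 (b₁ y)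
        have hgt : ¬((W.filter (fun z => b₁ z = b₁ y)).card + 1 ≤ cap₁ (b₁ y)) :=
          fun hc => hy1 ((pm_insert_iff h₁ hW1 hyW).mpr hc)
        have hyU : y ∈ U₁ := by
          rw [hU₁, Finset.mem_filter]
          exact ⟨Finset.mem_univ _, by omega⟩
        exact Finset.mem_union_left _ (Finset.mem_union_right _
          (Finset.mem_inter.mpr ⟨hyT, hyU⟩))
  have hGsub : Good ⊆ T := Finset.filter_subset _ _
  have c0 : (T \ Good).card = r - Good.card := by
    rw [Finset.card_sdiff_of_subset hGsub, hTcard]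
  have cG : Good.card ≤ r := hTcard ▸ Finset.card_le_card hGsub
  have c1 : (T \ Good).card ≤ ((T ∩ W) \ (U₁ ∪ U₂)).card + (T ∩ U₁).card + (T ∩ U₂).card := by
    calc (T \ Good).card ≤ (((T ∩ W) \ (U₁ ∪ U₂)) ∪ (T ∩ U₁) ∪ (T ∩ U₂)).card :=
          Finset.card_le_card hBad
      _ ≤ (((T ∩ W) \ (U₁ ∪ U₂)) ∪ (T ∩ U₁)).card + (T ∩ U₂).card := Finset.card_union_le _ _
      _ ≤ ((T ∩ W) \ (U₁ ∪ U₂)).card + (T ∩ U₁).card + (T ∩ U₂).card := by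
          have := Finset.card_union_le ((T ∩ W) \ (U₁ ∪ U₂)) (T ∩ U₁)
          omega
  have c2 : ((T ∩ W) \ (U₁ ∪ U₂)).card ≤ (W \ (U₁ ∪ U₂)).card :=
    Finset.card_le_card (Finset.sdiff_subset_sdiff Finset.inter_subset_right (le_refl _))
  have c3 : (W ∩ U₁).card + (W ∩ U₂).card
      = (W ∩ (U₁ ∪ U₂)).card + ((W ∩ U₁) ∩ (W ∩ U₂)).card := by
    rw [← Finset.card_union_add_card_inter, Finset.inter_union_distrib_left]
  have c4 : ((W ∩ U₁) ∩ (W ∩ U₂)).card ≤ W.card :=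
    Finset.card_le_card (Finset.inter_subset_left.trans Finset.inter_subset_left)
  have c5 : (W \ (U₁ ∪ U₂)).card + (W ∩ (U₁ ∪ U₂)).card = W.card :=
    Finset.card_sdiff_add_card_inter _ _
  have hfin : k ≤ Good.card := by omega
  exact hfin.trans (Finset.card_le_card hGN)

lemma two_mul_le_of_sq_le {X Y z : ℝ} (hX : 0 ≤ X) (hY : 0 ≤ Y) (h : z ^ 2 ≤ X * Y) :
    2 * z ≤ X + Y := by
  nlinarith [sq_nonneg (X - Y), sq_nonneg (X + Y - 2 * z)]

lemma block_CS {α κ : Type*} [DecidableEq α] [DecidableEq κ]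
    (V : Finset α) (key : α → κ) (f : α → ℝ) :
    (∑ x ∈ V, ((V.filter (fun y => key y = key x)).card : ℝ) * f x) ^ 2
      ≤ (∑ x ∈ V, ((V.filter (fun y => key y = key x)).card : ℝ))
        * (∑ x ∈ V, f x * ∑ y ∈ V.filter (fun y => key y = key x), f y)
    ∧ 0 ≤ ∑ x ∈ V, f x * ∑ y ∈ V.filter (fun y => key y = key x), f y := by
  classical
  set J := V.image key with hJ
  set σ : κ → ℝ := fun j => ∑ y ∈ V.filter (fun y => key y = j), f y with hσ
  set m : κ → ℝ := fun j => ((V.filter (fun y => key y = j)).card : ℝ) with hm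
  have hmaps : ∀ x ∈ V, key x ∈ J := fun x hx => Finset.mem_image_of_mem key hx
  have h1 : ∑ x ∈ V, ((V.filter (fun y => key y = key x)).card : ℝ) * f x
      = ∑ j ∈ J, m j * σ j := by
    rw [← Finset.sum_fiberwise_of_maps_to hmaps (fun x => m (key x) * f x)]
    apply Finset.sum_congr rfl
    intro j _
    rw [show (∑ x ∈ V.filter (fun x => key x = j), m (key x) * f x)
        = ∑ x ∈ V.filter (fun x => key x = j), m j * f x from
      Finset.sum_congr rfl (fun x hx => by rw [(Finset.mem_filter.mp hx).2]),
      ← Finset.mul_sum]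
  have h2 : ∑ x ∈ V, f x * (∑ y ∈ V.filter (fun y => key y = key x), f y)
      = ∑ j ∈ J, σ j ^ 2 := by
    rw [← Finset.sum_fiberwise_of_maps_to hmaps (fun x => f x * σ (key x))]
    apply Finset.sum_congr rfl
    intro j _
    rw [show (∑ x ∈ V.filter (fun x => key x = j), f x * σ (key x))
        = ∑ x ∈ V.filter (fun x => key x = j), f x * σ j from
      Finset.sum_congr rfl (fun x hx => by rw [(Finset.mem_filter.mp hx).2]),
      ← Finset.sum_mul]
    rw [sq]
  have h3 : ∑ x ∈ V, ((V.filter (fun y => key y = key x)).card : ℝ)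
      = ∑ j ∈ J, m j ^ 2 := by
    rw [← Finset.sum_fiberwise_of_maps_to hmaps (fun x => m (key x))]
    apply Finset.sum_congr rfl
    intro j _
    rw [show (∑ x ∈ V.filter (fun x => key x = j), m (key x))
        = ∑ x ∈ V.filter (fun x => key x = j), m j from
      Finset.sum_congr rfl (fun x hx => by rw [(Finset.mem_filter.mp hx).2]),
      Finset.sum_const, nsmul_eq_mul, sq]
  constructor
  · rw [h1, h2, h3]
    exact Finset.sum_mul_sq_le_sq_mul_sq J m σ
  · rw [h2]
    exact Finset.sum_nonneg fun j _ => sq_nonneg _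

set_option maxHeartbeats 1000000 in
/-- **Lemma (top links of the matroid intersection complex).** -/
theorem miHsLam2_le (M₁ M₂ : FinMatroid E) (b₁ b₂ : E → ℕ) (cap₁ cap₂ : ℕ → ℕ)
    (h₁ : IsPartitionWith M₁ b₁ cap₁) (h₂ : IsPartitionWith M₂ b₂ cap₂)
    (hnd : ∀ x y : E, x ≠ y → b₁ x = b₁ y → b₂ x ≠ b₂ y)
    (r : ℕ) (hr : ∃ T ∈ M₁.ind ∩ M₂.ind, T.card = r)
    (k : ℕ) (hk : 2 ≤ k) (hkr : (k : ℝ) ≤ (r : ℝ) / 3)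
    (S : Finset E) (hS : S ∈ M₁.ind ∩ M₂.ind) (hcard : S.card = k - 2) :
    miHsLam2 M₁ M₂ S ≤ 1 / (k : ℝ) := by
  classical
  have hk3 : 3 * k ≤ r := by
    rw [le_div_iff₀ (by norm_num : (0:ℝ) < 3)] at hkr
    have : ((3 * k : ℕ) : ℝ) ≤ (r : ℝ) := by push_cast; linarith
    exact_mod_cast this
  have hdeg : ∀ x ∈ miHsVerts M₁ M₂ S, k ≤ (miHsNbrs M₁ M₂ S x).card :=
    fun x hx => deg_lower h₁ h₂ hr hk hk3 hS hcard hx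
  have hkpos : (0:ℝ) < (k:ℝ) := by exact_mod_cast (by omega : 0 < k)
  apply Real.sSup_le _ (by positivity)
  rintro ρ ⟨f, hsum0, hDne, rfl⟩
  -- notation
  set V : Finset E := miHsVerts M₁ M₂ S with hV
  have hVmem : ∀ x ∈ V, x ∉ S ∧ insert x S ∈ M₁.ind ∧ insert x S ∈ M₂.ind := by
    intro x hx
    rw [hV] at hx
    obtain ⟨hxS, hxi⟩ := (Finset.mem_filter.mp hx).2
    rw [Finset.mem_inter] at hxi
    exact ⟨hxS, hxi.1, hxi.2⟩
  set key₁ : E → ℕ ⊕ E := fun z =>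
    if cap₁ (b₁ z) = (S.filter (fun w => b₁ w = b₁ z)).card + 1
      then Sum.inl (b₁ z) else Sum.inr z with hkey₁
  set key₂ : E → ℕ ⊕ E := fun z =>
    if cap₂ (b₂ z) = (S.filter (fun w => b₂ w = b₂ z)).card + 1
      then Sum.inl (b₂ z) else Sum.inr z with hkey₂
  have keyeq₁ : ∀ x y : E, key₁ y = key₁ x ↔
      (y = x ∨ (b₁ x = b₁ y ∧
        cap₁ (b₁ x) = (S.filter (fun w => b₁ w = b₁ x)).card + 1)) := by
    intro x y
    by_cases hx : cap₁ (b₁ x) = (S.filter (fun w => b₁ w = b₁ x)).card + 1 <;>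
      by_cases hy : cap₁ (b₁ y) = (S.filter (fun w => b₁ w = b₁ y)).card + 1
    · simp only [hkey₁, if_pos hx, if_pos hy, Sum.inl.injEq]
      constructor
      · intro h; exact Or.inr ⟨h.symm, hx⟩
      · rintro (h | h)
        · rw [h]
        · exact h.1.symm
    · simp only [hkey₁, if_pos hx, if_neg hy]
      constructor
      · intro h; exact absurd h (by simp)
      · rintro (h | h)
        · exfalso; rw [h] at hy; exact hy hx
        · exfalso; rw [h.1] at hx; exact hy hx
    · simp only [hkey₁, if_neg hx, if_pos hy]
      constructor
      · intro h; exact absurd h (by simp)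
      · rintro (h | h)
        · exfalso; rw [← h] at hx; exact hx hy
        · exact absurd h.2 hx
    · simp only [hkey₁, if_neg hx, if_neg hy, Sum.inr.injEq]
      constructor
      · intro h; exact Or.inl h
      · rintro (h | h)
        · exact h
        · exact absurd h.2 hx
  have keyeq₂ : ∀ x y : E, key₂ y = key₂ x ↔
      (y = x ∨ (b₂ x = b₂ y ∧
        cap₂ (b₂ x) = (S.filter (fun w => b₂ w = b₂ x)).card + 1)) := by
    intro x y
    by_cases hx : cap₂ (b₂ x) = (S.filter (fun w => b₂ w = b₂ x)).card + 1 <;>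
      by_cases hy : cap₂ (b₂ y) = (S.filter (fun w => b₂ w = b₂ y)).card + 1
    · simp only [hkey₂, if_pos hx, if_pos hy, Sum.inl.injEq]
      constructor
      · intro h; exact Or.inr ⟨h.symm, hx⟩
      · rintro (h | h)
        · rw [h]
        · exact h.1.symm
    · simp only [hkey₂, if_pos hx, if_neg hy]
      constructor
      · intro h; exact absurd h (by simp)
      · rintro (h | h)
        · exfalso; rw [h] at hy; exact hy hx
        · exfalso; rw [h.1] at hx; exact hy hx
    · simp only [hkey₂, if_neg hx, if_pos hy]
      constructor
      · intro h; exact absurd h (by simp)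
      · rintro (h | h)
        · exfalso; rw [← h] at hx; exact hx hy
        · exact absurd h.2 hx
    · simp only [hkey₂, if_neg hx, if_neg hy, Sum.inr.injEq]
      constructor
      · intro h; exact Or.inl h
      · rintro (h | h)
        · exact h
        · exact absurd h.2 hx
  -- the blocks
  have hxC₁ : ∀ x ∈ V, x ∈ V.filter (fun y => key₁ y = key₁ x) :=
    fun x hx => Finset.mem_filter.mpr ⟨hx, rfl⟩
  have hxC₂ : ∀ x ∈ V, x ∈ V.filter (fun y => key₂ y = key₂ x) :=
    fun x hx => Finset.mem_filter.mpr ⟨hx, rfl⟩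
  have hCsub : ∀ x : E, V.filter (fun y => key₁ y = key₁ x) ∪
      V.filter (fun y => key₂ y = key₂ x) ⊆ V :=
    fun x => Finset.union_subset (Finset.filter_subset _ _) (Finset.filter_subset _ _)
  have hNmem : ∀ x y : E, y ∈ miHsNbrs M₁ M₂ S x ↔
      y ∈ V ∧ y ≠ x ∧ insert y (insert x S) ∈ M₁.ind ∧ insert y (insert x S) ∈ M₂.ind := by
    intro x y
    rw [miHsNbrs, Finset.mem_filter, ← hV, Finset.mem_inter]
  have hKN : ∀ x ∈ V, miHsNbrs M₁ M₂ S x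
      = V \ (V.filter (fun y => key₁ y = key₁ x) ∪ V.filter (fun y => key₂ y = key₂ x)) := by
    intro x hx
    obtain ⟨hxS, hx1, hx2⟩ := hVmem x hx
    ext y
    rw [hNmem, Finset.mem_sdiff, Finset.mem_union, Finset.mem_filter, Finset.mem_filter]
    constructor
    · rintro ⟨hyV, hyx, hi1, hi2⟩
      obtain ⟨hyS, hy1, hy2⟩ := hVmem y hyV
      refine ⟨hyV, ?_⟩
      rintro (⟨-, hc⟩ | ⟨-, hc⟩)
      · rcases (keyeq₁ x y).mp hc with h | h
        · exact hyx h
        · exact ((pm_insert2_iff h₁ hxS hyS hyx hx1 hy1).mp hi1) h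
      · rcases (keyeq₂ x y).mp hc with h | h
        · exact hyx h
        · exact ((pm_insert2_iff h₂ hxS hyS hyx hx2 hy2).mp hi2) h
    · rintro ⟨hyV, hc⟩
      push_neg at hc
      obtain ⟨hc1, hc2⟩ := hc
      obtain ⟨hyS, hy1, hy2⟩ := hVmem y hyV
      have hyx : y ≠ x := fun h => (hc1 hyV) ((keyeq₁ x y).mpr (Or.inl h))
      refine ⟨hyV, hyx, ?_, ?_⟩
      · exact (pm_insert2_iff h₁ hxS hyS hyx hx1 hy1).mpr
          (fun h => (hc1 hyV) ((keyeq₁ x y).mpr (Or.inr h)))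
      · exact (pm_insert2_iff h₂ hxS hyS hyx hx2 hy2).mpr
          (fun h => (hc2 hyV) ((keyeq₂ x y).mpr (Or.inr h)))
  have hK3 : ∀ x ∈ V, V.filter (fun y => key₁ y = key₁ x) ∩
      V.filter (fun y => key₂ y = key₂ x) = {x} := by
    intro x hx
    ext y
    rw [Finset.mem_inter, Finset.mem_singleton, Finset.mem_filter, Finset.mem_filter]
    constructor
    · rintro ⟨⟨hyV, hk1⟩, ⟨-, hk2⟩⟩
      rcases (keyeq₁ x y).mp hk1 with h | hb1
      · exact h
      rcases (keyeq₂ x y).mp hk2 with h | hb2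
      · exact h
      by_contra hne
      exact absurd hb2.1 (hnd x y (fun h => hne h.symm) hb1.1)
    · rintro rfl
      exact ⟨⟨hx, rfl⟩, ⟨hx, rfl⟩⟩
  have hsum : ∀ x ∈ V, ∀ φ : E → ℝ,
      ∑ y ∈ miHsNbrs M₁ M₂ S x, φ y
        = ∑ y ∈ V, φ y - ∑ y ∈ V.filter (fun y => key₁ y = key₁ x), φ y
          - ∑ y ∈ V.filter (fun y => key₂ y = key₂ x), φ y + φ x := by
    intro x hx φ
    rw [hKN x hx, Finset.sum_sdiff_eq_sub (hCsub x)]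
    have hui := Finset.sum_union_inter (s₁ := V.filter (fun y => key₁ y = key₁ x))
      (s₂ := V.filter (fun y => key₂ y = key₂ x)) (f := φ)
    rw [hK3 x hx, Finset.sum_singleton] at hui
    linarith
  -- real quantities
  have hdegc : ∀ x ∈ V, ((miHsNbrs M₁ M₂ S x).card : ℝ)
      = (V.card : ℝ) - ((V.filter (fun y => key₁ y = key₁ x)).card : ℝ)
        - ((V.filter (fun y => key₂ y = key₂ x)).card : ℝ) + 1 := by
    intro x hx
    have h := hsum x hx (fun _ => (1:ℝ))
    simpa using h
  have hconstr : ((V.card : ℝ) + 1) * (∑ y ∈ V, f y)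
      = (∑ x ∈ V, ((V.filter (fun y => key₁ y = key₁ x)).card : ℝ) * f x)
        + (∑ x ∈ V, ((V.filter (fun y => key₂ y = key₂ x)).card : ℝ) * f x) := by
    have e : ∑ x ∈ V, ((miHsNbrs M₁ M₂ S x).card : ℝ) * f x
        = ∑ x ∈ V, (((V.card : ℝ) + 1) * f x
            - ((V.filter (fun y => key₁ y = key₁ x)).card : ℝ) * f x
            - ((V.filter (fun y => key₂ y = key₂ x)).card : ℝ) * f x) := by
      apply Finset.sum_congr rfl
      intro x hx
      rw [hdegc x hx]; ring
    rw [e, Finset.sum_sub_distrib, Finset.sum_sub_distrib, ← Finset.mul_sum] at hsum0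
    linarith
  have hNum : ∑ x ∈ V, f x * ∑ y ∈ miHsNbrs M₁ M₂ S x, f y
      = (∑ y ∈ V, f y) * (∑ y ∈ V, f y) + (∑ y ∈ V, f y ^ 2)
        - (∑ x ∈ V, f x * ∑ y ∈ V.filter (fun y => key₁ y = key₁ x), f y)
        - (∑ x ∈ V, f x * ∑ y ∈ V.filter (fun y => key₂ y = key₂ x), f y) := by
    have e : ∑ x ∈ V, f x * ∑ y ∈ miHsNbrs M₁ M₂ S x, f y
        = ∑ x ∈ V, (f x * (∑ y ∈ V, f y)
            - f x * (∑ y ∈ V.filter (fun y => key₁ y = key₁ x), f y)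
            - f x * (∑ y ∈ V.filter (fun y => key₂ y = key₂ x), f y) + f x ^ 2) := by
      apply Finset.sum_congr rfl
      intro x hx
      rw [hsum x hx f]; ring
    rw [e, Finset.sum_add_distrib, Finset.sum_sub_distrib, Finset.sum_sub_distrib,
      ← Finset.sum_mul]
    ring
  -- Cauchy-Schwarz data
  obtain ⟨hCS₁, hS₁nn⟩ := block_CS V key₁ f
  obtain ⟨hCS₂, hS₂nn⟩ := block_CS V key₂ f
  have hA₁nn : 0 ≤ ∑ x ∈ V, ((V.filter (fun y => key₁ y = key₁ x)).card : ℝ) :=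
    Finset.sum_nonneg fun x _ => Nat.cast_nonneg _
  have hA₂nn : 0 ≤ ∑ x ∈ V, ((V.filter (fun y => key₂ y = key₂ x)).card : ℝ) :=
    Finset.sum_nonneg fun x _ => Nat.cast_nonneg _
  have hAB : (∑ x ∈ V, ((V.filter (fun y => key₁ y = key₁ x)).card : ℝ))
      + (∑ x ∈ V, ((V.filter (fun y => key₂ y = key₂ x)).card : ℝ))
      ≤ ((V.card : ℝ) + 1) ^ 2 := by
    have hab : ∀ x ∈ V, ((V.filter (fun y => key₁ y = key₁ x)).card : ℝ)
        + ((V.filter (fun y => key₂ y = key₂ x)).card : ℝ) ≤ (V.card : ℝ) + 1 := by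
      intro x hx
      have hcu : (V.filter (fun y => key₁ y = key₁ x) ∪
          V.filter (fun y => key₂ y = key₂ x)).card
          + (V.filter (fun y => key₁ y = key₁ x) ∩
          V.filter (fun y => key₂ y = key₂ x)).card
          = (V.filter (fun y => key₁ y = key₁ x)).card
          + (V.filter (fun y => key₂ y = key₂ x)).card :=
        Finset.card_union_add_card_inter _ _
      have hle : (V.filter (fun y => key₁ y = key₁ x) ∪
          V.filter (fun y => key₂ y = key₂ x)).card ≤ V.card :=
        Finset.card_le_card (hCsub x)
      have hone : (V.filter (fun y => key₁ y = key₁ x) ∩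
          V.filter (fun y => key₂ y = key₂ x)).card = 1 := by
        rw [hK3 x hx]; exact Finset.card_singleton x
      have : (V.filter (fun y => key₁ y = key₁ x)).card
          + (V.filter (fun y => key₂ y = key₂ x)).card ≤ V.card + 1 := by omega
      exact_mod_cast this
    calc (∑ x ∈ V, ((V.filter (fun y => key₁ y = key₁ x)).card : ℝ))
        + (∑ x ∈ V, ((V.filter (fun y => key₂ y = key₂ x)).card : ℝ))
        = ∑ x ∈ V, (((V.filter (fun y => key₁ y = key₁ x)).card : ℝ)
            + ((V.filter (fun y => key₂ y = key₂ x)).card : ℝ)) :=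
          (Finset.sum_add_distrib).symm
      _ ≤ ∑ _x ∈ V, ((V.card : ℝ) + 1) := Finset.sum_le_sum hab
      _ = (V.card : ℝ) * ((V.card : ℝ) + 1) := by
          rw [Finset.sum_const, nsmul_eq_mul]
      _ ≤ ((V.card : ℝ) + 1) ^ 2 := by nlinarith [Nat.cast_nonneg (α := ℝ) V.card]
  -- abbreviations as local names via generalize-free nlinarith
  have hcross : 2 * ((∑ x ∈ V, ((V.filter (fun y => key₁ y = key₁ x)).card : ℝ) * f x)
        * (∑ x ∈ V, ((V.filter (fun y => key₂ y = key₂ x)).card : ℝ) * f x))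
      ≤ (∑ x ∈ V, ((V.filter (fun y => key₁ y = key₁ x)).card : ℝ))
          * (∑ x ∈ V, f x * ∑ y ∈ V.filter (fun y => key₂ y = key₂ x), f y)
        + (∑ x ∈ V, ((V.filter (fun y => key₂ y = key₂ x)).card : ℝ))
          * (∑ x ∈ V, f x * ∑ y ∈ V.filter (fun y => key₁ y = key₁ x), f y) := by
    apply two_mul_le_of_sq_le (mul_nonneg hA₁nn hS₂nn) (mul_nonneg hA₂nn hS₁nn)
    nlinarith [mul_le_mul hCS₁ hCS₂ (sq_nonneg _) (mul_nonneg hA₁nn hS₁nn)]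
  have hT2 : (∑ y ∈ V, f y) ^ 2
      ≤ (∑ x ∈ V, f x * ∑ y ∈ V.filter (fun y => key₁ y = key₁ x), f y)
        + (∑ x ∈ V, f x * ∑ y ∈ V.filter (fun y => key₂ y = key₂ x), f y) := by
    have h1 : (((V.card : ℝ) + 1) * (∑ y ∈ V, f y)) ^ 2
        ≤ ((∑ x ∈ V, ((V.filter (fun y => key₁ y = key₁ x)).card : ℝ))
            + (∑ x ∈ V, ((V.filter (fun y => key₂ y = key₂ x)).card : ℝ)))
          * ((∑ x ∈ V, f x * ∑ y ∈ V.filter (fun y => key₁ y = key₁ x), f y)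
            + (∑ x ∈ V, f x * ∑ y ∈ V.filter (fun y => key₂ y = key₂ x), f y)) := by
      rw [hconstr]
      nlinarith [hCS₁, hCS₂, hcross]
    have h2 : ((∑ x ∈ V, ((V.filter (fun y => key₁ y = key₁ x)).card : ℝ))
            + (∑ x ∈ V, ((V.filter (fun y => key₂ y = key₂ x)).card : ℝ)))
          * ((∑ x ∈ V, f x * ∑ y ∈ V.filter (fun y => key₁ y = key₁ x), f y)
            + (∑ x ∈ V, f x * ∑ y ∈ V.filter (fun y => key₂ y = key₂ x), f y))
        ≤ ((V.card : ℝ) + 1) ^ 2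
          * ((∑ x ∈ V, f x * ∑ y ∈ V.filter (fun y => key₁ y = key₁ x), f y)
            + (∑ x ∈ V, f x * ∑ y ∈ V.filter (fun y => key₂ y = key₂ x), f y)) :=
      mul_le_mul_of_nonneg_right hAB (by linarith)
    have hpos : (0:ℝ) < ((V.card : ℝ) + 1) ^ 2 := by positivity
    have h3 : ((V.card : ℝ) + 1) ^ 2 * (∑ y ∈ V, f y) ^ 2
        ≤ ((V.card : ℝ) + 1) ^ 2
          * ((∑ x ∈ V, f x * ∑ y ∈ V.filter (fun y => key₁ y = key₁ x), f y)
            + (∑ x ∈ V, f x * ∑ y ∈ V.filter (fun y => key₂ y = key₂ x), f y)) := by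
      nlinarith [h1, h2]
    exact le_of_mul_le_mul_left h3 hpos
  -- denominator
  have hDen0 : (0:ℝ) ≤ ∑ x ∈ V, ((miHsNbrs M₁ M₂ S x).card : ℝ) * f x ^ 2 :=
    Finset.sum_nonneg fun x _ => mul_nonneg (Nat.cast_nonneg _) (sq_nonneg _)
  have hDpos : (0:ℝ) < ∑ x ∈ V, ((miHsNbrs M₁ M₂ S x).card : ℝ) * f x ^ 2 :=
    lt_of_le_of_ne hDen0 (Ne.symm hDne)
  have hDenk : (k:ℝ) * (∑ y ∈ V, f y ^ 2)
      ≤ ∑ x ∈ V, ((miHsNbrs M₁ M₂ S x).card : ℝ) * f x ^ 2 := by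
    rw [Finset.mul_sum]
    apply Finset.sum_le_sum
    intro x hx
    have hkx : (k:ℝ) ≤ ((miHsNbrs M₁ M₂ S x).card : ℝ) := by
      exact_mod_cast hdeg x (hV ▸ hx)
    exact mul_le_mul_of_nonneg_right hkx (sq_nonneg _)
  -- conclude
  rw [div_le_div_iff₀ hDpos hkpos]
  nlinarith [hNum, hT2, hDenk, hDpos,
    mul_le_mul_of_nonneg_left hT2 hkpos.le]
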